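/- arXiv:0807.4101 — 3 statements merged into one kernel-verified Lean document; each statement's English description precedes it below -/
import Mathlib

section
/- For the 2×2 Gram matrix ((δ_L, κ_{LR}),(κ_{LR}, δ_R·κ_{LR})), the determinant equals κ_{LR}(δ_L δ_R − κ_{LR}); with the good parametrisation δ_L = [w_1], δ_R = [w_2], κ_{LR} = −[(w_1−w_2+θ)/2][(w_1−w_2−θ)/2], this determinant equals −[(w_1−w_2+θ)/2]·[(w_1−w_2−θ)/2]·[(w_1+w_2+θ)/2]·[(w_1+w_2−θ)/2]. -/
/-!
Expanding the determinant gives `κ (δ_L δ_R - κ)`. Writing `w₁ - w₂ + θ = 2m`, the second factor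
`[w₁][w₂] + [m][m - θ]` collapses to `[m + w₂][m + w₂ - θ]` by the quantum-integer identity
`[a + s][a] - [b + s][b] = [a - b][a + b + s]`, which becomes a Laurent-polynomial identity in `q`
once products are written over the common denominator `(q - q⁻¹)²`. The identity holds for every
`q`: when `q = 0` or `q = q⁻¹` all quantum integers vanish.
-/

noncomputable def qint {k : Type*} [Field k] (q : k) (n : ℤ) : k :=
  (q ^ n - q ^ (-n)) / (q - q⁻¹)

section QuantumInteger

variable {k : Type*} [Field k]

@[simp]
lemma qint_zero_left (n : ℤ) : qint (0 : k) n = 0 := by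
  rcases eq_or_ne n 0 with rfl | hn
  · simp [qint]
  · simp [qint, zero_zpow n hn, zero_zpow (-n) (neg_ne_zero.mpr hn)]

lemma qint_mul_qint {q : k} (hq : q ≠ 0) (a b : ℤ) :
    qint q a * qint q b =
      (q ^ (a + b) + q ^ (-(a + b)) - q ^ (a - b) - q ^ (-(a - b))) / (q - q⁻¹) ^ 2 := by
  rw [qint, qint, div_mul_div_comm, sq]
  congr 1
  simp only [zpow_add₀ hq, zpow_sub₀ hq, zpow_neg]
  field_simp
  ring

lemma qint_add_mul_sub_qint_add_mul (q : k) (a b s : ℤ) :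
    qint q (a + s) * qint q a - qint q (b + s) * qint q b =
      qint q (a - b) * qint q (a + b + s) := by
  rcases eq_or_ne q 0 with rfl | hq
  · simp
  rw [qint_mul_qint hq, qint_mul_qint hq, qint_mul_qint hq, ← sub_div]
  ring_nf

end QuantumInteger

lemma det_gram_two {R : Type*} [CommRing R] (δL δR κ : R) :
    Matrix.det !![δL, κ; κ, δR * κ] = κ * (δL * δR - κ) := by
  rw [Matrix.det_fin_two_of]
  ring

theorem gram_det_b2_general {k : Type*} [Field k] (q : k)
    (w₁ w₂ θ : ℤ) (hpar : Even (w₁ - w₂ + θ)) :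
    (Matrix.det !![qint q w₁, -(qint q ((w₁ - w₂ + θ) / 2) * qint q ((w₁ - w₂ - θ) / 2));
        -(qint q ((w₁ - w₂ + θ) / 2) * qint q ((w₁ - w₂ - θ) / 2)),
        qint q w₂ * -(qint q ((w₁ - w₂ + θ) / 2) * qint q ((w₁ - w₂ - θ) / 2))] =
      -(qint q ((w₁ - w₂ + θ) / 2) * qint q ((w₁ - w₂ - θ) / 2)) *
        (qint q w₁ * qint q w₂ -
          -(qint q ((w₁ - w₂ + θ) / 2) * qint q ((w₁ - w₂ - θ) / 2)))) ∧
    Matrix.det !![qint q w₁, -(qint q ((w₁ - w₂ + θ) / 2) * qint q ((w₁ - w₂ - θ) / 2));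
        -(qint q ((w₁ - w₂ + θ) / 2) * qint q ((w₁ - w₂ - θ) / 2)),
        qint q w₂ * -(qint q ((w₁ - w₂ + θ) / 2) * qint q ((w₁ - w₂ - θ) / 2))] =
      -(qint q ((w₁ - w₂ + θ) / 2) * qint q ((w₁ - w₂ - θ) / 2) *
        qint q ((w₁ + w₂ + θ) / 2) * qint q ((w₁ + w₂ - θ) / 2)) := by
  refine ⟨det_gram_two _ _ _, ?_⟩
  rw [det_gram_two]
  obtain ⟨m, hm⟩ := hpar
  have e₁ : (w₁ - w₂ + θ) / 2 = m := by omega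
  have e₂ : (w₁ - w₂ - θ) / 2 = m - θ := by omega
  have e₃ : (w₁ + w₂ + θ) / 2 = m - θ + w₂ + θ := by omega
  have e₄ : (w₁ + w₂ - θ) / 2 = m - θ + w₂ := by omega
  have hw₁ : w₁ = m - θ + w₂ + (m - θ) + θ := by omega
  have key := qint_add_mul_sub_qint_add_mul q (m - θ + w₂) (m - θ) θ
  rw [sub_add_cancel, add_sub_cancel_left] at key
  rw [e₁, e₂, e₃, e₄, hw₁]
  linear_combination (qint q m * qint q (m - θ)) * key

/-- The Gram determinant `Δ_2(0)` of `S_2(0)`: for the `2×2` Gram matrix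
`((δ_L, κ_{LR}), (κ_{LR}, δ_R κ_{LR}))` the determinant equals
`κ_{LR}(δ_L δ_R − κ_{LR})`; and with the good parametrisation
`δ_L = [w₁]`, `δ_R = [w₂]`, `κ_{LR} = −[(w₁−w₂+θ)/2][(w₁−w₂−θ)/2]`
it equals `−[(w₁−w₂+θ)/2][(w₁−w₂−θ)/2][(w₁+w₂+θ)/2][(w₁+w₂−θ)/2]`. -/
theorem gram_det_b2 {k : Type*} [Field k] (q : k) (hq : q ≠ 0) (hq2 : q ^ 2 ≠ 1)
    (w₁ w₂ θ : ℤ) (hpar : Even (w₁ - w₂ + θ)) :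
    (Matrix.det !![qint q w₁, -(qint q ((w₁ - w₂ + θ) / 2) * qint q ((w₁ - w₂ - θ) / 2));
        -(qint q ((w₁ - w₂ + θ) / 2) * qint q ((w₁ - w₂ - θ) / 2)),
        qint q w₂ * -(qint q ((w₁ - w₂ + θ) / 2) * qint q ((w₁ - w₂ - θ) / 2))] =
      -(qint q ((w₁ - w₂ + θ) / 2) * qint q ((w₁ - w₂ - θ) / 2)) *
        (qint q w₁ * qint q w₂ -
          -(qint q ((w₁ - w₂ + θ) / 2) * qint q ((w₁ - w₂ - θ) / 2)))) ∧
    Matrix.det !![qint q w₁, -(qint q ((w₁ - w₂ + θ) / 2) * qint q ((w₁ - w₂ - θ) / 2));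
        -(qint q ((w₁ - w₂ + θ) / 2) * qint q ((w₁ - w₂ - θ) / 2)),
        qint q w₂ * -(qint q ((w₁ - w₂ + θ) / 2) * qint q ((w₁ - w₂ - θ) / 2))] =
      -(qint q ((w₁ - w₂ + θ) / 2) * qint q ((w₁ - w₂ - θ) / 2) *
        qint q ((w₁ + w₂ + θ) / 2) * qint q ((w₁ + w₂ - θ) / 2)) :=
  gram_det_b2_general q w₁ w₂ θ hpar
end

section
/- Let u = u_1 s u_2 s u_3 be a reduced word in the presented algebra A_n in which the two displayed occurrences of the generator s are consecutive (u_2 contains no s), and suppose every generator in u_2 not commuting with s equals a single generator t. Then u_2 contains exactly one occurrence of t, and s ∈ {E_0, E_n}. -/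
open FreeAlgebra

/-- The six parameters `δ, δ_L, δ_R, κ_L, κ_R, κ_{LR}` of the symplectic blob algebra. -/
structure Params (k : Type*) where
  δ : k
  δL : k
  δR : k
  κL : k
  κR : k
  κLR : k

/-- The word `I`: the product of the odd-indexed generators `E_1 E_3 ⋯`. -/
def Iword (n : ℕ) : List (Fin (n + 1)) :=
  (List.finRange (n + 1)).filter (fun i => i.val % 2 = 1)

/-- The word `J`: the product of the even-indexed generators `E_0 E_2 ⋯`. -/
def Jword (n : ℕ) : List (Fin (n + 1)) :=
  (List.finRange (n + 1)).filter (fun i => i.val % 2 = 0)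

/-- The monomial in the free algebra corresponding to a word in the generators. -/
def wordProd (k : Type*) [CommRing k] {n : ℕ} (u : List (Fin (n + 1))) :
    FreeAlgebra k (Fin (n + 1)) :=
  (u.map (FreeAlgebra.ι k)).prod

/-- The defining relations of the algebra `A_n` (the quotient of the two boundary
Temperley–Lieb algebra by the topological relations `IJI = κ_{LR} I`, `JIJ = κ_{LR} J`),
with `E = E_0` and `F = E_n`. -/
inductive SBRel {k : Type*} [CommRing k] {n : ℕ} (p : Params k) :
    FreeAlgebra k (Fin (n + 1)) → FreeAlgebra k (Fin (n + 1)) → Prop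
  | comm (i j : Fin (n + 1)) (h : i.val + 1 < j.val) :
      SBRel p (ι k i * ι k j) (ι k j * ι k i)
  | left_sq :
      SBRel p (ι k (0 : Fin (n + 1)) * ι k 0) (p.δL • ι k (0 : Fin (n + 1)))
  | right_sq :
      SBRel p (ι k (Fin.last n) * ι k (Fin.last n)) (p.δR • ι k (Fin.last n))
  | mid_sq (i : Fin (n + 1)) (h1 : 1 ≤ i.val) (h2 : i.val < n) :
      SBRel p (ι k i * ι k i) (p.δ • ι k i)
  | left_braid (i j : Fin (n + 1)) (hi : i.val = 1) (hj : j.val = 0) :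
      SBRel p (ι k i * ι k j * ι k i) (p.κL • ι k i)
  | right_braid (i j : Fin (n + 1)) (hi : i.val + 1 = n) (hj : j.val = n) :
      SBRel p (ι k i * ι k j * ι k i) (p.κR • ι k i)
  | braid_up (i j : Fin (n + 1)) (h : i.val + 1 = j.val) (h1 : 1 ≤ i.val) (h2 : j.val < n) :
      SBRel p (ι k i * ι k j * ι k i) (ι k i)
  | braid_down (i j : Fin (n + 1)) (h : i.val + 1 = j.val) (h1 : 1 ≤ i.val) (h2 : j.val < n) :
      SBRel p (ι k j * ι k i * ι k j) (ι k j)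
  | topI :
      SBRel p (wordProd k (Iword n ++ Jword n ++ Iword n)) (p.κLR • wordProd k (Iword n))
  | topJ :
      SBRel p (wordProd k (Jword n ++ Iword n ++ Jword n)) (p.κLR • wordProd k (Jword n))

/-- The presented algebra `A_n`. -/
def SBAlg (k : Type*) [CommRing k] (n : ℕ) (p : Params k) :=
  RingQuot (SBRel (k := k) (n := n) p)

noncomputable instance (k : Type*) [CommRing k] (n : ℕ) (p : Params k) :
    Ring (SBAlg k n p) := inferInstanceAs (Ring (RingQuot (SBRel p)))

noncomputable instance (k : Type*) [CommRing k] (n : ℕ) (p : Params k) :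
    Algebra k (SBAlg k n p) := inferInstanceAs (Algebra k (RingQuot (SBRel p)))

/-- The image of a word in the generators in the algebra `A_n`. -/
noncomputable def algWord {k : Type*} [CommRing k] {n : ℕ} (p : Params k)
    (u : List (Fin (n + 1))) : SBAlg k n p :=
  RingQuot.mkAlgHom k (SBRel p) (wordProd k u)

/-- The generator `E_i` of `A_n`. -/
noncomputable def gen {k : Type*} [CommRing k] {n : ℕ} (p : Params k) (i : Fin (n + 1)) :
    SBAlg k n p :=
  RingQuot.mkAlgHom k (SBRel p) (ι k i)

/-- A monomial `u` in the generators is *reduced* if it cannot be expressed, using the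
relations, as a scalar multiple of a strictly shorter monomial. -/
def Reduced {k : Type*} [CommRing k] {n : ℕ} (p : Params k) (u : List (Fin (n + 1))) :
    Prop :=
  ∀ (v : List (Fin (n + 1))) (c : k), v.length < u.length → algWord p u ≠ c • algWord p v

/-- The generators `E_i` and `E_j` do not commute: `|i - j| = 1`. -/
def Adj {n : ℕ} (i j : Fin (n + 1)) : Prop :=
  i.val + 1 = j.val ∨ j.val + 1 = i.val

/-!
Write the reduced word as `u₁ (s w s) u₃`; its subword `s w s` is reduced as well. If `w`
contained no neighbour of `s`, then `E_s` would commute past `w` and `E_s² = c E_s` would shorten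
the word, so `t` occurs in `w`. If `t` occurs exactly once and `s` is an interior generator, `E_s`
commutes up to `E_t` from both sides and `E_s E_t E_s = c E_s` shortens the word; hence
`s ∈ {E_0, E_n}`. If `t` occurred twice, two consecutive occurrences `t y t` form a reduced
subword; `y` then contains a neighbour `g₀ ≠ s` of `t`, the only one in `y`, so by induction on
the length `t ∈ {E_0, E_n}`, which is impossible for a generator with the two distinct neighbours
`s` and `g₀`.
-/

lemma List.exists_eq_append_cons_append_cons_of_two_le_count {α : Type*} [DecidableEq α]
    {a : α} {l : List α} (h : 2 ≤ l.count a) :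
    ∃ x y z, l = x ++ a :: (y ++ a :: z) ∧ a ∉ y := by
  obtain ⟨x, r, rfl, hx⟩ :=
    List.eq_append_cons_of_mem (List.count_pos_iff.mp (by omega : 0 < l.count a))
  have hr : 0 < r.count a := by
    simp only [List.count_append, List.count_cons_self, List.count_eq_zero.mpr hx] at h
    omega
  obtain ⟨y, z, rfl, hy⟩ := List.eq_append_cons_of_mem (List.count_pos_iff.mp hr)
  exact ⟨x, y, z, rfl, hy⟩

section Path

variable {n : ℕ}

lemma Adj.symm {i j : Fin (n + 1)} (h : Adj i j) : Adj j i := Or.symm h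

lemma Adj.eq_or_eq_or_eq {a b c t : Fin (n + 1)} (ha : Adj a t) (hb : Adj b t)
    (hc : Adj c t) : a = b ∨ a = c ∨ b = c := by
  simp only [Adj, Fin.ext_iff] at *
  omega

lemma Adj.eq_of_eq_zero_or_eq_last {a b t : Fin (n + 1)} (ht : t = 0 ∨ t = Fin.last n)
    (ha : Adj a t) (hb : Adj b t) : a = b := by
  have : t.val = 0 ∨ t.val = n := by rcases ht with rfl | rfl <;> simp
  have := a.isLt
  have := b.isLt
  simp only [Adj, Fin.ext_iff] at *
  omega

end Path

section Relations

variable {k : Type*} [CommRing k] {n : ℕ} (p : Params k)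

lemma algWord_eq_prod (u : List (Fin (n + 1))) : algWord p u = (u.map (gen p)).prod := by
  simp only [algWord, wordProd, map_list_prod, List.map_map]
  rfl

lemma algWord_append (u v : List (Fin (n + 1))) :
    algWord p (u ++ v) = algWord p u * algWord p v := by
  simp only [algWord_eq_prod, List.map_append, List.prod_append]

lemma algWord_cons (i : Fin (n + 1)) (u : List (Fin (n + 1))) :
    algWord p (i :: u) = gen p i * algWord p u := by
  simp only [algWord_eq_prod, List.map_cons, List.prod_cons]

lemma algWord_nil : algWord p ([] : List (Fin (n + 1))) = 1 := by
  simp only [algWord_eq_prod, List.map_nil, List.prod_nil]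

lemma gen_mul_gen (i j : Fin (n + 1)) :
    gen p i * gen p j = RingQuot.mkAlgHom k (SBRel p) (ι k i * ι k j) :=
  (map_mul _ _ _).symm

lemma gen_mul_gen_mul_gen (i j l : Fin (n + 1)) :
    gen p i * gen p j * gen p l = RingQuot.mkAlgHom k (SBRel p) (ι k i * ι k j * ι k l) := by
  rw [map_mul, map_mul]
  rfl

lemma exists_gen_mul_self_eq_smul (s : Fin (n + 1)) :
    ∃ c : k, gen p s * gen p s = c • gen p s := by
  rw [gen_mul_gen]
  by_cases h0 : s = 0
  · subst h0
    exact ⟨p.δL, by rw [RingQuot.mkAlgHom_rel k SBRel.left_sq, map_smul]; rfl⟩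
  by_cases hl : s = Fin.last n
  · subst hl
    exact ⟨p.δR, by rw [RingQuot.mkAlgHom_rel k SBRel.right_sq, map_smul]; rfl⟩
  have h1 : 1 ≤ s.val := Nat.one_le_iff_ne_zero.mpr (Fin.val_ne_of_ne h0)
  exact ⟨p.δ, by
    rw [RingQuot.mkAlgHom_rel k (SBRel.mid_sq s h1 (Fin.val_lt_last hl)), map_smul]; rfl⟩

lemma exists_gen_mul_gen_mul_gen_eq_smul {s t : Fin (n + 1)} (h0 : s ≠ 0)
    (hl : s ≠ Fin.last n) (hst : Adj s t) :
    ∃ c : k, gen p s * gen p t * gen p s = c • gen p s := by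
  have h1 : 1 ≤ s.val := Nat.one_le_iff_ne_zero.mpr (Fin.val_ne_of_ne h0)
  have h2 : s.val < n := Fin.val_lt_last hl
  rw [gen_mul_gen_mul_gen]
  rcases hst with h | h
  · by_cases ht : t.val = n
    · exact ⟨p.κR, by
        rw [RingQuot.mkAlgHom_rel k (SBRel.right_braid s t (by omega) ht), map_smul]; rfl⟩
    · exact ⟨1, by
        rw [RingQuot.mkAlgHom_rel k (SBRel.braid_up s t h h1 (by omega)), one_smul]; rfl⟩
  · by_cases ht : t.val = 0
    · exact ⟨p.κL, by
        rw [RingQuot.mkAlgHom_rel k (SBRel.left_braid s t (by omega) ht), map_smul]; rfl⟩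
    · exact ⟨1, by
        rw [RingQuot.mkAlgHom_rel k (SBRel.braid_down t s h (by omega) h2), one_smul]; rfl⟩

lemma commute_gen_gen {i j : Fin (n + 1)} (hne : i ≠ j) (hadj : ¬ Adj i j) :
    Commute (gen p i) (gen p j) := by
  have hij : i.val ≠ j.val := Fin.val_ne_of_ne hne
  simp only [Adj, not_or] at hadj
  unfold Commute SemiconjBy
  rw [gen_mul_gen, gen_mul_gen]
  rcases Nat.lt_or_gt_of_ne hij with h | h
  · exact RingQuot.mkAlgHom_rel k (SBRel.comm i j (by omega))
  · exact (RingQuot.mkAlgHom_rel k (SBRel.comm j i (by omega))).symm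

lemma commute_gen_algWord {s : Fin (n + 1)} {w : List (Fin (n + 1))} (hs : s ∉ w)
    (hw : ∀ g ∈ w, ¬ Adj g s) : Commute (gen p s) (algWord p w) := by
  rw [algWord_eq_prod]
  refine Commute.list_prod_right _ _ fun x hx => ?_
  obtain ⟨g, hg, rfl⟩ := List.mem_map.mp hx
  exact commute_gen_gen p (fun h => hs (h ▸ hg)) fun h => hw g hg h.symm

end Relations

section Reduced

variable {k : Type*} [CommRing k] {n : ℕ} {p : Params k}

lemma Reduced.of_isInfix {m u : List (Fin (n + 1))} (h : Reduced p u) (hmu : m <:+: u) :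
    Reduced p m := by
  obtain ⟨x, y, rfl⟩ := hmu
  intro v c hv hm
  refine h (x ++ v ++ y) c (by simp only [List.length_append]; omega) ?_
  simp only [algWord_append, hm, mul_smul_comm, smul_mul_assoc]

lemma not_reduced_of_forall_not_adj {s : Fin (n + 1)} {w : List (Fin (n + 1))} (hs : s ∉ w)
    (hw : ∀ g ∈ w, ¬ Adj g s) : ¬ Reduced p (s :: (w ++ [s])) := by
  intro hred
  obtain ⟨c, hc⟩ := exists_gen_mul_self_eq_smul p s
  refine hred (w ++ [s]) c (by simp) ?_
  simp only [algWord_cons, algWord_append, algWord_nil, mul_one]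
  rw [← mul_assoc, (commute_gen_algWord p hs hw).eq, mul_assoc, hc, mul_smul_comm]

lemma not_reduced_of_braid {s t : Fin (n + 1)} {a b : List (Fin (n + 1))} (h0 : s ≠ 0)
    (hl : s ≠ Fin.last n) (hst : Adj s t) (hsa : s ∉ a) (ha : ∀ g ∈ a, ¬ Adj g s)
    (hsb : s ∉ b) (hb : ∀ g ∈ b, ¬ Adj g s) :
    ¬ Reduced p (s :: (a ++ t :: b ++ [s])) := by
  intro hred
  obtain ⟨c, hc⟩ := exists_gen_mul_gen_mul_gen_eq_smul p h0 hl hst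
  refine hred (a ++ s :: b) c (by simp) ?_
  have hA := (commute_gen_algWord p hsa ha).eq
  have hB := (commute_gen_algWord p hsb hb).eq
  simp only [algWord_cons, algWord_append, algWord_nil, mul_one]
  calc gen p s * (algWord p a * (gen p t * algWord p b) * gen p s)
      = algWord p a * (gen p s * gen p t * gen p s) * algWord p b := by
        simp only [← mul_assoc]
        rw [hA, mul_assoc _ (algWord p b), ← hB]
        simp only [← mul_assoc]
    _ = c • (algWord p a * (gen p s * algWord p b)) := by
        rw [hc, mul_smul_comm, smul_mul_assoc, mul_assoc]

lemma Reduced.exists_adj_mem {s : Fin (n + 1)} {w : List (Fin (n + 1))}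
    (hred : Reduced p (s :: (w ++ [s]))) (hs : s ∉ w) : ∃ g ∈ w, Adj g s := by
  by_contra! hw
  exact not_reduced_of_forall_not_adj hs hw hred

lemma Reduced.eq_zero_or_eq_last {s t : Fin (n + 1)} {w : List (Fin (n + 1))}
    (hred : Reduced p (s :: (w ++ [s]))) (hs : s ∉ w) (hst : Adj s t)
    (hall : ∀ g ∈ w, Adj g s → g = t) (hcount : w.count t = 1) :
    s = 0 ∨ s = Fin.last n := by
  obtain ⟨a, b, rfl, hta⟩ :=
    List.eq_append_cons_of_mem (List.count_pos_iff.mp (by omega : 0 < w.count t))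
  have htb : t ∉ b := by
    simp only [List.count_append, List.count_cons_self, List.count_eq_zero.mpr hta] at hcount
    exact List.count_eq_zero.mp (by omega)
  have hnoadj : ∀ c ⊆ a ++ t :: b, t ∉ c → ∀ g ∈ c, ¬ Adj g s :=
    fun c hc htc g hg hgs => htc (hall g (hc hg) hgs ▸ hg)
  by_contra! hbd
  exact not_reduced_of_braid hbd.1 hbd.2 hst (fun h => hs (by simp [h]))
    (hnoadj a (by simp) hta) (fun h => hs (by simp [h])) (hnoadj b (by simp) htb)
    (by simpa using hred)

lemma Reduced.count_eq_one {s t : Fin (n + 1)} {w : List (Fin (n + 1))}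
    (hred : Reduced p (s :: (w ++ [s]))) (hs : s ∉ w) (hst : Adj s t)
    (hall : ∀ g ∈ w, Adj g s → g = t) : w.count t = 1 := by
  have htw : t ∈ w := by
    obtain ⟨g, hg, hgs⟩ := hred.exists_adj_mem hs
    exact hall g hg hgs ▸ hg
  by_contra hne
  obtain ⟨x, y, z, rfl, hty⟩ := List.exists_eq_append_cons_append_cons_of_two_le_count
    (show 2 ≤ w.count t by have := List.count_pos_iff.mpr htw; omega)
  have hinner : Reduced p (t :: (y ++ [t])) :=
    hred.of_isInfix ⟨s :: x, z ++ [s], by simp⟩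
  obtain ⟨g₀, hg₀, hg₀t⟩ := hinner.exists_adj_mem hty
  have hg₀s : g₀ ≠ s := fun h => hs (by simp [← h, hg₀])
  have hall' : ∀ g ∈ y, Adj g t → g = g₀ := fun g hg hgt =>
    have hgs : g ≠ s := fun h => hs (by simp [← h, hg])
    (Adj.eq_or_eq_or_eq hgt hg₀t hst).resolve_right (not_or.mpr ⟨hgs, hg₀s⟩)
  have hcount := Reduced.count_eq_one hinner hty hg₀t.symm hall'
  have ht := hinner.eq_zero_or_eq_last hty hg₀t.symm hall' hcount
  exact hg₀s (Adj.eq_of_eq_zero_or_eq_last ht hg₀t hst)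
termination_by w.length
decreasing_by subst_vars; simp only [List.length_append, List.length_cons]; omega

end Reduced

theorem consecutive_occurrences_general {k : Type*} [Field k] {n : ℕ} (p : Params k)
    (u₁ u₂ u₃ : List (Fin (n + 1))) (s t : Fin (n + 1))
    (hred : Reduced p (u₁ ++ s :: (u₂ ++ s :: u₃)))
    (hcons : s ∉ u₂)
    (hst : Adj s t)
    (hall : ∀ g ∈ u₂, Adj g s → g = t) :
    u₂.count t = 1 ∧ (s = 0 ∨ s = Fin.last n) := by
  have hinner : Reduced p (s :: (u₂ ++ [s])) :=
    hred.of_isInfix ⟨u₁, u₃, by simp⟩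
  have hcount := hinner.count_eq_one hcons hst hall
  exact ⟨hcount, hinner.eq_zero_or_eq_last hcons hst hall hcount⟩

/-- Lemma: let `u = u₁ s u₂ s u₃` be a reduced word in which the displayed occurrences of
the generator `s` are consecutive, and suppose every generator in `u₂` not commuting
with `s` is of the same type `t`.  Then `u₂` contains only one occurrence of `t`, and
`s ∈ {E_0, E_n}`. -/
theorem consecutive_occurrences {k : Type*} [Field k] {n : ℕ} (hn : 1 ≤ n) (p : Params k)
    (u₁ u₂ u₃ : List (Fin (n + 1))) (s t : Fin (n + 1))
    (hred : Reduced p (u₁ ++ s :: (u₂ ++ s :: u₃)))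
    (hcons : s ∉ u₂)
    (hst : Adj s t)
    (hall : ∀ g ∈ u₂, Adj g s → g = t) :
    u₂.count t = 1 ∧ (s = 0 ∨ s = Fin.last n) :=
  consecutive_occurrences_general p u₁ u₂ u₃ s t hred hcons hst hall
end

section
/- Suppose s ∈ M corresponds to a reduced monomial with Cartier–Foata normal form s_1⋯s_p, and s is not left reducible. Then for 1 ≤ i < p: (i) if E_0 occurs in s_{i+1} then E_1 occurs in s_i; (ii) if E_n occurs in s_{i+1} then E_{n−1} occurs in s_i; (iii) if 0 < j < n and E_j occurs in s_{i+1}, then both E_{j−1} and E_{j+1} occur in s_i. -/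
open FreeAlgebra

/-- Generators `E_i`, `E_j` commute in the commutation monoid iff `|i - j| > 1`. -/
def Distant {n : ℕ} (i j : Fin (n + 1)) : Prop :=
  i.val + 1 < j.val ∨ j.val + 1 < i.val

/-- The commutation relation on the free monoid on `E_0, …, E_n`. -/
def CommRel (n : ℕ) : FreeMonoid (Fin (n + 1)) → FreeMonoid (Fin (n + 1)) → Prop :=
  fun x y => ∃ i j : Fin (n + 1), Distant i j ∧
    x = FreeMonoid.of i * FreeMonoid.of j ∧ y = FreeMonoid.of j * FreeMonoid.of i

/-- The commutation monoid `M` on generators `E_0, …, E_n`. -/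
def CMon (n : ℕ) := (conGen (CommRel n)).Quotient

instance (n : ℕ) : Monoid (CMon n) :=
  inferInstanceAs (Monoid (conGen (CommRel n)).Quotient)

/-- The image in `M` of a word in the generators. -/
def mkW {n : ℕ} (u : List (Fin (n + 1))) : CMon n :=
  Con.mk' _ (FreeMonoid.ofList u)

/-- A column of a Cartier–Foata factorization: a nonempty set of distinct,
pairwise commuting generators. -/
def GoodCol {n : ℕ} (s : Finset (Fin (n + 1))) : Prop :=
  s.Nonempty ∧ ∀ i ∈ s, ∀ j ∈ s, i ≠ j → Distant i j

/-- The product in `M` of a set of (pairwise commuting) generators. -/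
def colProd {n : ℕ} (s : Finset (Fin (n + 1))) : CMon n :=
  mkW (s.sort (· ≤ ·))

/-- A Cartier–Foata factorization. -/
def IsCF {n : ℕ} (L : List (Finset (Fin (n + 1)))) : Prop :=
  (∀ s ∈ L, GoodCol s) ∧
    L.Chain' (fun s t => ∀ j ∈ t, ∃ i ∈ s, ¬ Distant i j)

/-- An element of `M` corresponds to a reduced monomial if some (equivalently, any)
representative word is reduced with respect to the relations of `A_n`. -/
def ReducedM {k : Type*} [CommRing k] {n : ℕ} (p : Params k) (x : CMon n) : Prop :=
  ∃ u : List (Fin (n + 1)), mkW u = x ∧ Reduced p u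

/-- `x` is left reducible: it is commutation equivalent to a word `s t v` with `s`, `t`
noncommuting generators and `t ∉ {E_0, E_n}`. -/
def LeftReducible {n : ℕ} (x : CMon n) : Prop :=
  ∃ (a b : Fin (n + 1)) (v : List (Fin (n + 1))),
    Adj a b ∧ b ≠ 0 ∧ b ≠ Fin.last n ∧ x = mkW (a :: b :: v)

/-- `x` is right reducible: it is commutation equivalent to a word `v t s` with `s`, `t`
noncommuting generators and `t ∉ {E_0, E_n}`. -/
def RightReducible {n : ℕ} (x : CMon n) : Prop :=
  ∃ (a b : Fin (n + 1)) (v : List (Fin (n + 1))),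
    Adj a b ∧ b ≠ 0 ∧ b ≠ Fin.last n ∧ x = mkW (v ++ [b, a])

/-!
A generator lying in both `s_i` and `s_{i+1}` could be commuted into a square `E_a E_a`, so
consecutive columns are disjoint and the Cartier–Foata condition gives every `E_j ∈ s_{i+1}` a
neighbour `E_a ∈ s_i`. If `0 < j < n` and `E_a` were its only neighbour there, `E_j` could be moved
right behind `E_a`. Now go back one column: it cannot contain `E_a` (square) or `E_j`
(braid `E_j E_a E_j`), since the monomial is reduced, so it contains a unique neighbour of `E_a`,
which takes over the role of `E_a`. In the first column the adjacent pair moves to the front,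
and `x` would be left reducible.
-/

namespace CMon

variable {n : ℕ}

def of (a : Fin (n + 1)) : CMon n := mkW [a]

lemma mkW_append (u v : List (Fin (n + 1))) : mkW (u ++ v) = mkW u * mkW v :=
  map_mul (Con.mk' _) (FreeMonoid.ofList u) (FreeMonoid.ofList v)

lemma mkW_cons (a : Fin (n + 1)) (u : List (Fin (n + 1))) : mkW (a :: u) = of a * mkW u :=
  mkW_append [a] u

lemma mkW_surjective : Function.Surjective (mkW : List (Fin (n + 1)) → CMon n) :=
  Con.mk'_surjective.comp FreeMonoid.ofList.surjective

lemma commute_of_distant {a b : Fin (n + 1)} (h : Distant a b) : Commute (of a) (of b) :=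
  (Con.eq _).mpr (ConGen.Rel.of _ _ ⟨a, b, h, rfl, rfl⟩)

def lift {N : Type*} [Monoid N] (f : Fin (n + 1) → N)
    (hf : ∀ a b, Distant a b → Commute (f a) (f b)) : CMon n →* N :=
  Con.lift _ (FreeMonoid.lift f) <| Con.conGen_le.mpr <| by
    rintro _ _ ⟨a, b, h, rfl, rfl⟩
    simpa [Con.ker_rel] using (hf a b h).eq

lemma lift_mkW {N : Type*} [Monoid N] (f : Fin (n + 1) → N)
    (hf : ∀ a b, Distant a b → Commute (f a) (f b)) (u : List (Fin (n + 1))) :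
    lift f hf (mkW u) = (u.map f).prod :=
  FreeMonoid.lift_apply f (FreeMonoid.ofList u)

lemma lift_of {N : Type*} [Monoid N] (f : Fin (n + 1) → N)
    (hf : ∀ a b, Distant a b → Commute (f a) (f b)) (a : Fin (n + 1)) :
    lift f hf (of a) = f a := by
  simp [of, lift_mkW]

def length (x : CMon n) : ℕ :=
  Multiplicative.toAdd (lift (fun _ => Multiplicative.ofAdd 1) (fun _ _ _ => Commute.all _ _) x)

lemma length_mkW (u : List (Fin (n + 1))) : (mkW u).length = u.length := by
  simp [length, lift_mkW]

lemma length_mul (x y : CMon n) : (x * y).length = x.length + y.length := by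
  simp [length]

lemma length_of (a : Fin (n + 1)) : (of a).length = 1 :=
  length_mkW [a]

lemma mkW_eq_prod (u : List (Fin (n + 1))) : mkW u = (u.map of).prod := by
  induction u with
  | nil => rfl
  | cons a u ih => rw [mkW_cons, ih, List.map_cons, List.prod_cons]

end CMon

open CMon

section Columns

variable {n : ℕ} {s : Finset (Fin (n + 1))}

lemma GoodCol.pairwise (hs : GoodCol s) : (s : Set (Fin (n + 1))).Pairwise Distant :=
  fun i hi j hj => hs.2 i hi j hj

lemma colProd_eq_noncommProd (hs : (s : Set (Fin (n + 1))).Pairwise Distant) :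
    colProd s = s.noncommProd of (hs.mono' fun _ _ => commute_of_distant) := by
  have hcomm := Finset.noncommProd_lemma s of (hs.mono' fun _ _ => commute_of_distant)
  rw [← s.sort_eq (· ≤ ·), Multiset.map_coe] at hcomm
  rw [colProd, mkW_eq_prod, ← Multiset.noncommProd_coe _ hcomm, Finset.noncommProd]
  congr 1
  rw [← Multiset.map_coe, Finset.sort_eq]

lemma pairwise_coe_erase {α : Type*} [DecidableEq α] {r : α → α → Prop} {s : Finset α}
    (hs : (s : Set α).Pairwise r) (a : α) : ((s.erase a : Finset α) : Set α).Pairwise r :=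
  hs.mono (Finset.coe_subset.mpr (s.erase_subset a))

lemma colProd_erase_mul (hs : (s : Set (Fin (n + 1))).Pairwise Distant) {a : Fin (n + 1)}
    (ha : a ∈ s) : colProd (s.erase a) * of a = colProd s := by
  rw [colProd_eq_noncommProd hs, colProd_eq_noncommProd (pairwise_coe_erase hs a)]
  exact Finset.noncommProd_erase_mul s ha of _

lemma commute_colProd (hs : (s : Set (Fin (n + 1))).Pairwise Distant) {b : Fin (n + 1)}
    (hb : ∀ c ∈ s, Distant c b) : Commute (colProd s) (of b) := by
  rw [colProd_eq_noncommProd hs]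
  refine (Finset.noncommProd_commute s of _ (of b) fun c hc => ?_).symm
  exact commute_of_distant (hb c hc).symm

lemma commute_colProd_erase (hs : (s : Set (Fin (n + 1))).Pairwise Distant) {a b : Fin (n + 1)}
    (hb : ∀ c ∈ s, c ≠ a → Distant c b) : Commute (colProd (s.erase a)) (of b) :=
  commute_colProd (pairwise_coe_erase hs a) fun c hc =>
    hb c (Finset.mem_of_mem_erase hc) (Finset.ne_of_mem_erase hc)

lemma of_mul_colProd_erase (hs : (s : Set (Fin (n + 1))).Pairwise Distant) {a : Fin (n + 1)}
    (ha : a ∈ s) : of a * colProd (s.erase a) = colProd s := by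
  rw [← (commute_colProd_erase hs fun c hc hca => hs hc ha hca).eq, colProd_erase_mul hs ha]

end Columns

section Algebra

variable {k : Type*} [CommRing k] {n : ℕ} (p : Params k)

lemma gen_commute {i j : Fin (n + 1)} (h : Distant i j) : Commute (gen p i) (gen p j) := by
  rcases h with h | h
  · have h := RingQuot.mkAlgHom_rel k (SBRel.comm (p := p) i j h)
    rw [map_mul, map_mul] at h
    exact h
  · have h := RingQuot.mkAlgHom_rel k (SBRel.comm (p := p) j i h)
    rw [map_mul, map_mul] at h
    exact h.symm

noncomputable def toAlg : CMon n →* SBAlg k n p :=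
  CMon.lift (gen p) fun _ _ => gen_commute p

lemma toAlg_mkW (u : List (Fin (n + 1))) : toAlg p (mkW u) = algWord p u := by
  rw [toAlg, lift_mkW, algWord, wordProd, map_list_prod, List.map_map]
  rfl

lemma toAlg_of (a : Fin (n + 1)) : toAlg p (of a) = gen p a :=
  lift_of _ _ a

lemma exists_gen_mul_self (a : Fin (n + 1)) : ∃ c : k, gen p a * gen p a = c • gen p a := by
  obtain ⟨c, h⟩ : ∃ c : k, RingQuot.mkAlgHom k (SBRel p) (ι k a * ι k a) =
      RingQuot.mkAlgHom k (SBRel p) (c • ι k a) := by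
    by_cases h0 : a = 0
    · exact ⟨p.δL, h0 ▸ RingQuot.mkAlgHom_rel k SBRel.left_sq⟩
    by_cases hn : a = Fin.last n
    · exact ⟨p.δR, hn ▸ RingQuot.mkAlgHom_rel k SBRel.right_sq⟩
    exact ⟨p.δ, RingQuot.mkAlgHom_rel k (SBRel.mid_sq a
      (Nat.one_le_iff_ne_zero.mpr (Fin.val_ne_iff.mpr h0)) (Fin.val_lt_last hn))⟩
  rw [map_mul, map_smul] at h
  exact ⟨c, h⟩

lemma exists_gen_mul_gen_mul_gen {a b : Fin (n + 1)} (hab : Adj a b) (hb0 : b ≠ 0)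
    (hbn : b ≠ Fin.last n) : ∃ c : k, gen p b * gen p a * gen p b = c • gen p b := by
  have hb1 : 1 ≤ b.val := Nat.one_le_iff_ne_zero.mpr (Fin.val_ne_iff.mpr hb0)
  have hb2 : b.val < n := Fin.val_lt_last hbn
  have ha := a.isLt
  obtain ⟨c, h⟩ : ∃ c : k, RingQuot.mkAlgHom k (SBRel p) (ι k b * ι k a * ι k b) =
      RingQuot.mkAlgHom k (SBRel p) (c • ι k b) := by
    rcases hab with h | h
    · by_cases ha0 : a.val = 0
      · exact ⟨p.κL, RingQuot.mkAlgHom_rel k (SBRel.left_braid b a (by omega) ha0)⟩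
      · exact ⟨1, (one_smul k (ι k b)).symm ▸
          RingQuot.mkAlgHom_rel k (SBRel.braid_down a b h (by omega) hb2)⟩
    · by_cases han : a.val = n
      · exact ⟨p.κR, RingQuot.mkAlgHom_rel k (SBRel.right_braid b a (by omega) han)⟩
      · exact ⟨1, (one_smul k (ι k b)).symm ▸
          RingQuot.mkAlgHom_rel k (SBRel.braid_up b a h hb1 (by omega))⟩
  rw [map_mul, map_mul, map_smul] at h
  exact ⟨c, h⟩

variable {p} {x : CMon n}

lemma ReducedM.toAlg_ne_smul (hx : ReducedM p x) {y : CMon n} (hy : y.length < x.length)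
    (c : k) : toAlg p x ≠ c • toAlg p y := by
  obtain ⟨u, rfl, hu⟩ := hx
  obtain ⟨v, rfl⟩ := mkW_surjective y
  rw [length_mkW, length_mkW] at hy
  rw [toAlg_mkW, toAlg_mkW]
  exact hu v c hy

lemma ReducedM.mul_mul_ne {w w' : CMon n} {c : k} (hx : ReducedM p x)
    (hw : toAlg p w = c • toAlg p w') (hlen : w'.length < w.length) (X Y : CMon n) :
    X * w * Y ≠ x := by
  rintro rfl
  refine hx.toAlg_ne_smul (y := X * w' * Y) (by simp only [length_mul]; omega) c ?_
  rw [map_mul, map_mul, hw, map_mul, map_mul, mul_smul_comm, smul_mul_assoc]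

lemma ReducedM.mul_of_mul_of_ne (hx : ReducedM p x) (a : Fin (n + 1)) (X Y : CMon n) :
    X * (of a * of a) * Y ≠ x := by
  obtain ⟨c, hc⟩ := exists_gen_mul_self p a
  refine hx.mul_mul_ne (w' := of a) (c := c) ?_ (by simp [length_mul, length_of]) X Y
  rw [map_mul, toAlg_of, hc]

lemma ReducedM.mul_braid_ne (hx : ReducedM p x) {a b : Fin (n + 1)} (hab : Adj a b)
    (hb0 : b ≠ 0) (hbn : b ≠ Fin.last n) (X Y : CMon n) :
    X * (of b * of a * of b) * Y ≠ x := by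
  obtain ⟨c, hc⟩ := exists_gen_mul_gen_mul_gen p hab hb0 hbn
  refine hx.mul_mul_ne (w' := of b) (c := c) ?_ (by simp [length_mul, length_of]) X Y
  rw [map_mul, map_mul, toAlg_of, toAlg_of, hc]

end Algebra

section Neighbours

variable {n : ℕ} {a b c h : Fin (n + 1)}

lemma adj_of_not_distant (hne : a ≠ b) (hd : ¬ Distant a b) : Adj a b := by
  have := Fin.val_ne_of_ne hne
  unfold Adj
  unfold Distant at hd
  omega

lemma ne_zero_of_adj_of_adj (hha : Adj h a) (hab : Adj a b) (hhb : h ≠ b) : a ≠ 0 := by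
  have := Fin.val_ne_of_ne hhb
  rw [Ne, Fin.ext_iff, Fin.val_zero]
  unfold Adj at hha hab
  omega

lemma ne_last_of_adj_of_adj (hha : Adj h a) (hab : Adj a b) (hhb : h ≠ b) : a ≠ Fin.last n := by
  have := Fin.val_ne_of_ne hhb
  rw [Ne, Fin.ext_iff, Fin.val_last]
  have := h.isLt
  have := b.isLt
  unfold Adj at hha hab
  omega

lemma eq_of_adj_of_adj_of_adj (hha : Adj h a) (hab : Adj a b) (hca : Adj c a) (hch : c ≠ h)
    (hhb : h ≠ b) : c = b := by
  have := Fin.val_ne_of_ne hch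
  have := Fin.val_ne_of_ne hhb
  rw [Fin.ext_iff]
  unfold Adj at hha hab hca
  omega

end Neighbours

section CartierFoata

variable {n : ℕ} {P R : List (Finset (Fin (n + 1)))} {s t : Finset (Fin (n + 1))}

lemma IsCF.append_left (h : IsCF (P ++ R)) : IsCF P :=
  ⟨fun s hs => h.1 s (List.mem_append_left R hs), List.IsChain.left_of_append h.2⟩

lemma IsCF.append_cons_left (h : IsCF (P ++ s :: R)) : IsCF (P ++ [s]) :=
  (List.append_cons P s R ▸ h).append_left

lemma IsCF.exists_not_distant (h : IsCF (P ++ s :: t :: R)) :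
    ∀ j ∈ t, ∃ i ∈ s, ¬ Distant i j :=
  (List.isChain_append_cons_cons.mp h.2).2.1

end CartierFoata

section Reducibility

variable {k : Type*} [CommRing k] {n : ℕ} {p : Params k} {x : CMon n}

theorem leftReducible_of_unique_neighbour (hx : ReducedM p x) (P : List (Finset (Fin (n + 1)))) :
    ∀ {s : Finset (Fin (n + 1))} {a b : Fin (n + 1)} (r : CMon n), IsCF (P ++ [s]) → a ∈ s →
      Adj a b → b ≠ 0 → b ≠ Fin.last n → (∀ c ∈ s, c ≠ a → Distant c b) →
      (P.map colProd).prod * colProd s * of b * r = x → LeftReducible x := by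
  induction P using List.reverseRecOn with
  | nil =>
    intro s a b r hcf ha hab hb0 hbn huniq hxr
    have hs := (hcf.1 s (by simp)).pairwise
    have hTa := commute_colProd_erase hs fun c hc hca => hs hc ha hca
    have hTb := commute_colProd_erase hs huniq
    obtain ⟨v, hv⟩ := mkW_surjective (colProd (s.erase a) * r)
    refine ⟨a, b, v, hab, hb0, hbn, ?_⟩
    rw [← hxr, mkW_cons, mkW_cons, hv, ← colProd_erase_mul hs ha, List.map_nil, List.prod_nil,
      one_mul, mul_assoc, mul_assoc, hTa.left_comm, hTb.left_comm]
  | append_singleton P s' ih =>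
    intro s a b r hcf ha hab hb0 hbn huniq hxr
    have hs := (hcf.1 s (by simp)).pairwise
    have hneighbour := (by simpa using hcf : IsCF (P ++ s' :: s :: [])).exists_not_distant
    have hs' := (hcf.1 s' (by simp)).pairwise
    have hTb := commute_colProd_erase hs huniq
    rw [List.map_append, List.prod_append, List.map_singleton, List.prod_singleton] at hxr
    by_cases has' : a ∈ s'
    · refine (hx.mul_of_mul_of_ne a ((P.map colProd).prod * colProd (s'.erase a))
        (colProd (s.erase a) * of b * r) ?_).elim
      rw [← hxr, ← colProd_erase_mul hs' has', ← of_mul_colProd_erase hs ha]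
      simp only [mul_assoc]
    by_cases hbs' : b ∈ s'
    · refine (hx.mul_braid_ne hab hb0 hbn ((P.map colProd).prod * colProd (s'.erase b) *
        colProd (s.erase a)) r ?_).elim
      rw [← hxr, ← colProd_erase_mul hs' hbs', ← colProd_erase_mul hs ha]
      simp only [mul_assoc]
      rw [hTb.left_comm]
    obtain ⟨h, hh, hha⟩ := hneighbour a ha
    have hha : Adj h a := adj_of_not_distant (ne_of_mem_of_not_mem hh has') hha
    have hhb : h ≠ b := ne_of_mem_of_not_mem hh hbs'
    refine ih (colProd (s.erase a) * of b * r) hcf.append_left hh hha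
      (ne_zero_of_adj_of_adj hha hab hhb) (ne_last_of_adj_of_adj hha hab hhb) ?_ ?_
    · intro c hc hch
      by_contra hca
      have hca := adj_of_not_distant (ne_of_mem_of_not_mem hc has') hca
      exact hbs' (eq_of_adj_of_adj_of_adj hha hab hca hch hhb ▸ hc)
    · rw [← hxr, ← of_mul_colProd_erase hs ha]
      simp only [mul_assoc]

end Reducibility

section ConsecutiveColumns

variable {k : Type*} [CommRing k] {n : ℕ} {p : Params k} {x : CMon n}
  {P R : List (Finset (Fin (n + 1)))} {s t : Finset (Fin (n + 1))}

lemma prod_map_colProd_append_cons_cons :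
    ((P ++ s :: t :: R).map colProd).prod =
      (P.map colProd).prod * colProd s * colProd t * (R.map colProd).prod := by
  simp only [List.map_append, List.map_cons, List.prod_append, List.prod_cons, mul_assoc]

lemma disjoint_of_consecutive (hx : ReducedM p x) (hcf : IsCF (P ++ s :: t :: R))
    (hprod : ((P ++ s :: t :: R).map colProd).prod = x) : Disjoint s t := by
  rw [Finset.disjoint_left]
  intro c hcs hct
  have hs := (hcf.1 s (by simp)).pairwise
  have ht := (hcf.1 t (by simp)).pairwise
  refine hx.mul_of_mul_of_ne c ((P.map colProd).prod * colProd (s.erase c))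
    (colProd (t.erase c) * (R.map colProd).prod) ?_
  rw [← hprod, prod_map_colProd_append_cons_cons, ← colProd_erase_mul hs hcs,
    ← of_mul_colProd_erase ht hct]
  simp only [mul_assoc]

lemma exists_adj_of_mem_of_consecutive (hx : ReducedM p x) (hcf : IsCF (P ++ s :: t :: R))
    (hprod : ((P ++ s :: t :: R).map colProd).prod = x) {j : Fin (n + 1)} (hj : j ∈ t) :
    ∃ g ∈ s, Adj g j := by
  obtain ⟨g, hg, hgj⟩ := hcf.exists_not_distant j hj
  exact ⟨g, hg, adj_of_not_distant
    (Finset.disjoint_iff_ne.mp (disjoint_of_consecutive hx hcf hprod) g hg j hj) hgj⟩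

lemma exists_ne_adj_of_mem_of_consecutive (hx : ReducedM p x) (hnl : ¬ LeftReducible x)
    (hcf : IsCF (P ++ s :: t :: R)) (hprod : ((P ++ s :: t :: R).map colProd).prod = x)
    {j g : Fin (n + 1)} (hj : j ∈ t) (hj0 : j ≠ 0) (hjn : j ≠ Fin.last n) (hg : g ∈ s)
    (hgj : Adj g j) : ∃ c ∈ s, c ≠ g ∧ Adj c j := by
  by_contra! honly
  have ht := (hcf.1 t (by simp)).pairwise
  refine hnl (leftReducible_of_unique_neighbour hx P (colProd (t.erase j) * (R.map colProd).prod)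
    hcf.append_cons_left hg hgj hj0 hjn ?_ ?_)
  · intro c hc hcg
    by_contra hcj
    exact honly c hc hcg (adj_of_not_distant
      (Finset.disjoint_iff_ne.mp (disjoint_of_consecutive hx hcf hprod) c hc j hj) hcj)
  · rw [← hprod, prod_map_colProd_append_cons_cons, ← of_mul_colProd_erase ht hj]
    simp only [mul_assoc]

end ConsecutiveColumns

theorem cf_occurrence_propagation_general {k : Type*} [Field k] {n : ℕ}
    (p : Params k) (x : CMon n) (hred : ReducedM p x) (hnl : ¬ LeftReducible x)
    (L : List (Finset (Fin (n + 1)))) (hcf : IsCF L)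
    (hprod : (L.map colProd).prod = x) :
    ∀ (i : ℕ) (hi : i + 1 < L.length),
      ((0 : Fin (n + 1)) ∈ L[i + 1]'hi →
        ∃ g ∈ L[i]'(Nat.lt_of_succ_lt hi), g.val = 1) ∧
      (Fin.last n ∈ L[i + 1]'hi →
        ∃ g ∈ L[i]'(Nat.lt_of_succ_lt hi), g.val + 1 = n) ∧
      (∀ j : Fin (n + 1), 0 < j.val → j.val < n → j ∈ L[i + 1]'hi →
        (∃ g ∈ L[i]'(Nat.lt_of_succ_lt hi), g.val + 1 = j.val) ∧
        (∃ g ∈ L[i]'(Nat.lt_of_succ_lt hi), g.val = j.val + 1)) := by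
  intro i hi
  have hsplit : L = L.take i ++ L[i] :: L[i + 1] :: L.drop (i + 2) := by
    rw [← List.drop_eq_getElem_cons, ← List.drop_eq_getElem_cons, List.take_append_drop]
  rw [hsplit] at hcf hprod
  have hadj := fun j => exists_adj_of_mem_of_consecutive (j := j) hred hcf hprod
  refine ⟨fun h0 => ?_, fun hlast => ?_, fun j hj0 hjn hj => ?_⟩
  · obtain ⟨g, hg, hgj⟩ := hadj 0 h0
    exact ⟨g, hg, by unfold Adj at hgj; simp only [Fin.val_zero] at hgj; omega⟩
  · obtain ⟨g, hg, hgj⟩ := hadj _ hlast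
    have := g.isLt
    exact ⟨g, hg, by unfold Adj at hgj; simp only [Fin.val_last] at hgj; omega⟩
  · obtain ⟨g, hg, hgj⟩ := hadj j hj
    obtain ⟨c, hc, hcg, hcj⟩ := exists_ne_adj_of_mem_of_consecutive hred hnl hcf hprod hj
      (Fin.pos_iff_ne_zero.mp hj0) (Fin.ne_last_of_lt (b := Fin.last n) hjn) hg hgj
    have := Fin.val_ne_of_ne hcg
    unfold Adj at hgj hcj
    rcases hgj with hgj | hgj
    · exact ⟨⟨g, hg, hgj⟩, ⟨c, hc, by omega⟩⟩
    · exact ⟨⟨c, hc, by omega⟩, ⟨g, hg, by omega⟩⟩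

/-- Suppose `x ∈ M` corresponds to a reduced monomial with Cartier–Foata normal form
`s_1 ⋯ s_p`, and `x` is not left reducible.  Then for `1 ≤ i < p`: (i) if `E_0` occurs
in `s_{i+1}` then `E_1` occurs in `s_i`; (ii) if `E_n` occurs in `s_{i+1}` then
`E_{n-1}` occurs in `s_i`; (iii) if `0 < j < n` and `E_j` occurs in `s_{i+1}`, then both
`E_{j-1}` and `E_{j+1}` occur in `s_i`. -/
theorem cf_occurrence_propagation {k : Type*} [Field k] {n : ℕ} (hn : 1 ≤ n)
    (p : Params k) (x : CMon n) (hred : ReducedM p x) (hnl : ¬ LeftReducible x)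
    (L : List (Finset (Fin (n + 1)))) (hcf : IsCF L)
    (hprod : (L.map colProd).prod = x) :
    ∀ (i : ℕ) (hi : i + 1 < L.length),
      ((0 : Fin (n + 1)) ∈ L[i + 1]'hi →
        ∃ g ∈ L[i]'(Nat.lt_of_succ_lt hi), g.val = 1) ∧
      (Fin.last n ∈ L[i + 1]'hi →
        ∃ g ∈ L[i]'(Nat.lt_of_succ_lt hi), g.val + 1 = n) ∧
      (∀ j : Fin (n + 1), 0 < j.val → j.val < n → j ∈ L[i + 1]'hi →
        (∃ g ∈ L[i]'(Nat.lt_of_succ_lt hi), g.val + 1 = j.val) ∧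
        (∃ g ∈ L[i]'(Nat.lt_of_succ_lt hi), g.val = j.val + 1)) :=
  cf_occurrence_propagation_general p x hred hnl L hcf hprod
end
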